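/- Let Θ be the transpose map and S the completely depolarizing channel S(e) = (1/ν) tr(e) 1 on B(ℂ^ν). Define T_p = (1−p) S + p Θ for p ∈ [0,1]. Then T_p is completely positive if and only if p ≤ 1/(ν+1). -/

import Mathlib

open scoped Kronecker Matrix.Norms.L2Operator ComplexOrder
open Matrix Classical

namespace QI

/-- Total matrix square root: the positive square root for positive semidefinite
matrices, junk value `0` otherwise. -/
noncomputable def msqrt {n : Type*} [Fintype n] [DecidableEq n] (A : Matrix n n ℂ) :
    Matrix n n ℂ :=
  if h : A.PosSemidef then
    (h.1.eigenvectorUnitary : Matrix n n ℂ) * diagonal ((↑) ∘ Real.sqrt ∘ h.1.eigenvalues) *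
      star (h.1.eigenvectorUnitary : Matrix n n ℂ)
  else 0

/-- Trace norm `‖X‖₁ = tr √(Xᴴ X)`. -/
noncomputable def traceNorm {n : Type*} [Fintype n] [DecidableEq n] (X : Matrix n n ℂ) : ℝ :=
  (msqrt (Xᴴ * X)).trace.re

/-- Fidelity `f(ρ,σ) = tr √(√ρ σ √ρ)`. -/
noncomputable def fid {n : Type*} [Fintype n] [DecidableEq n] (ρ σ : Matrix n n ℂ) : ℝ :=
  (msqrt (msqrt ρ * σ * msqrt ρ)).trace.re

/-- Amplification `id_k ⊗ Φ` of a map between matrix algebras. -/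
noncomputable def amp {nB nA : ℕ} (k : ℕ)
    (Φ : Matrix (Fin nB) (Fin nB) ℂ →ₗ[ℂ] Matrix (Fin nA) (Fin nA) ℂ) :
    Matrix (Fin k × Fin nB) (Fin k × Fin nB) ℂ →ₗ[ℂ]
      Matrix (Fin k × Fin nA) (Fin k × Fin nA) ℂ where
  toFun X := Matrix.of fun p q => Φ (Matrix.of fun a b => X (p.1, a) (q.1, b)) p.2 q.2
  map_add' X Y := by
    ext p q
    have h : (Matrix.of fun a b => (X + Y) (p.1, a) (q.1, b))
        = (Matrix.of fun a b => X (p.1, a) (q.1, b))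
          + Matrix.of fun a b => Y (p.1, a) (q.1, b) := by
      ext a b; simp
    show Φ (Matrix.of fun a b => (X + Y) (p.1, a) (q.1, b)) p.2 q.2
      = Φ (Matrix.of fun a b => X (p.1, a) (q.1, b)) p.2 q.2
        + Φ (Matrix.of fun a b => Y (p.1, a) (q.1, b)) p.2 q.2
    rw [h, map_add]; rfl
  map_smul' c X := by
    ext p q
    have h : (Matrix.of fun a b => (c • X) (p.1, a) (q.1, b))
        = c • Matrix.of fun a b => X (p.1, a) (q.1, b) := by
      ext a b; simp
    show Φ (Matrix.of fun a b => (c • X) (p.1, a) (q.1, b)) p.2 q.2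
      = (c • Φ (Matrix.of fun a b => X (p.1, a) (q.1, b))) p.2 q.2
    rw [h, _root_.map_smul]

/-- Operator norm of a linear map between matrix spaces, each equipped with the
ℓ²-operator norm. -/
noncomputable def opNorm {m n : Type*} [Fintype m] [Fintype n] [DecidableEq m] [DecidableEq n]
    (Φ : Matrix m m ℂ →ₗ[ℂ] Matrix n n ℂ) : ℝ :=
  ‖LinearMap.toContinuousLinearMap Φ‖

/-- The norm of complete boundedness `‖Φ‖_cb = sup_k ‖id_k ⊗ Φ‖`. -/
noncomputable def cbNorm {nB nA : ℕ}
    (Φ : Matrix (Fin nB) (Fin nB) ℂ →ₗ[ℂ] Matrix (Fin nA) (Fin nA) ℂ) : ℝ :=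
  ⨆ k : ℕ, opNorm (amp k Φ)

/-- Complete positivity. -/
def IsCP {nB nA : ℕ}
    (Φ : Matrix (Fin nB) (Fin nB) ℂ →ₗ[ℂ] Matrix (Fin nA) (Fin nA) ℂ) : Prop :=
  ∀ (k : ℕ) (X : Matrix (Fin k × Fin nB) (Fin k × Fin nB) ℂ),
    X.PosSemidef → (amp k Φ X).PosSemidef

/-- The (Heisenberg picture) channel `T(b) = Vᴴ (b ⊗ 1_E) V` defined by a Stinespring
operator `V : H_A → H_B ⊗ H_E`. -/
noncomputable def stine {nA nB nE : ℕ} (V : Matrix (Fin nB × Fin nE) (Fin nA) ℂ) :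
    Matrix (Fin nB) (Fin nB) ℂ →ₗ[ℂ] Matrix (Fin nA) (Fin nA) ℂ where
  toFun b := Vᴴ * (b ⊗ₖ (1 : Matrix (Fin nE) (Fin nE) ℂ)) * V
  map_add' b c := by simp [Matrix.add_kronecker, Matrix.add_mul, Matrix.mul_add]
  map_smul' c b := by simp [Matrix.smul_kronecker, Matrix.smul_mul, Matrix.mul_smul]

/-- The complementary channel `T_E(e) = Vᴴ (1_B ⊗ e) V`. -/
noncomputable def stineC {nA nB nE : ℕ} (V : Matrix (Fin nB × Fin nE) (Fin nA) ℂ) :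
    Matrix (Fin nE) (Fin nE) ℂ →ₗ[ℂ] Matrix (Fin nA) (Fin nA) ℂ where
  toFun e := Vᴴ * ((1 : Matrix (Fin nB) (Fin nB) ℂ) ⊗ₖ e) * V
  map_add' b c := by simp [Matrix.kronecker_add, Matrix.add_mul, Matrix.mul_add]
  map_smul' c b := by simp [Matrix.kronecker_smul, Matrix.smul_mul, Matrix.mul_smul]

/-- The Schrödinger (trace-duality) adjoint `Φ_*`, determined by
`tr (Φ_*(ρ) b) = tr (ρ Φ(b))`. -/
noncomputable def dualMap {nB nA : ℕ}
    (Φ : Matrix (Fin nB) (Fin nB) ℂ →ₗ[ℂ] Matrix (Fin nA) (Fin nA) ℂ) :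
    Matrix (Fin nA) (Fin nA) ℂ →ₗ[ℂ] Matrix (Fin nB) (Fin nB) ℂ where
  toFun ρ := Matrix.of fun i j => (ρ * Φ (Matrix.single j i 1)).trace
  map_add' ρ τ := by ext i j; simp [Matrix.add_mul]
  map_smul' c ρ := by ext i j; simp [Matrix.smul_mul]

/-- Outer product `|ψ⟩⟨ψ|`. -/
def outer {n : Type*} (ψ : n → ℂ) : Matrix n n ℂ :=
  Matrix.vecMulVec ψ (star ψ)

/-- Partial trace over the second tensor factor. -/
noncomputable def ptrace2 {a e : Type*} [Fintype e] (M : Matrix (a × e) (a × e) ℂ) : Matrix a a ℂ :=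
  Matrix.of fun i j => ∑ k, M (i, k) (j, k)

/-- Partial trace over the first tensor factor. -/
noncomputable def ptrace1 {a e : Type*} [Fintype a] (M : Matrix (a × e) (a × e) ℂ) : Matrix e e ℂ :=
  Matrix.of fun i j => ∑ k, M (k, i) (k, j)

/-- The Schrödinger picture channel `T_*(ρ) = tr_E (V ρ Vᴴ)`. -/
noncomputable def schrod {nA nB nE : ℕ} (V : Matrix (Fin nB × Fin nE) (Fin nA) ℂ) :
    Matrix (Fin nA) (Fin nA) ℂ →ₗ[ℂ] Matrix (Fin nB) (Fin nB) ℂ where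
  toFun ρ := ptrace2 (V * ρ * Vᴴ)
  map_add' ρ τ := by
    ext i j
    simp [ptrace2, Matrix.add_mul, Matrix.mul_add, Finset.sum_add_distrib]
  map_smul' c ρ := by
    ext i j
    simp [ptrace2, Matrix.smul_mul, Matrix.mul_smul, Finset.mul_sum]

/-- Completely depolarizing channel `S(e) = tr(σ e) 1_A` (Heisenberg picture). -/
noncomputable def depol {nE nA : ℕ} (σ : Matrix (Fin nE) (Fin nE) ℂ) :
    Matrix (Fin nE) (Fin nE) ℂ →ₗ[ℂ] Matrix (Fin nA) (Fin nA) ℂ where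
  toFun e := (σ * e).trace • 1
  map_add' e f := by simp [Matrix.mul_add, add_smul]
  map_smul' c e := by simp [Matrix.mul_smul, smul_smul]

/-- The transpose map `Θ(e) = eᵀ`. -/
def transposeMap (ν : ℕ) : Matrix (Fin ν) (Fin ν) ℂ →ₗ[ℂ] Matrix (Fin ν) (Fin ν) ℂ where
  toFun e := eᵀ
  map_add' := by intros; simp
  map_smul' := by intros; simp

/-- The maximally depolarizing channel `S(e) = (1/ν) tr(e) 1`. -/
noncomputable def depolS (ν : ℕ) :
    Matrix (Fin ν) (Fin ν) ℂ →ₗ[ℂ] Matrix (Fin ν) (Fin ν) ℂ :=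
  depol ((ν : ℂ)⁻¹ • (1 : Matrix (Fin ν) (Fin ν) ℂ))

/-- `T_p = (1-p) S + p Θ`. -/
noncomputable def Tp (ν : ℕ) (p : ℝ) :
    Matrix (Fin ν) (Fin ν) ℂ →ₗ[ℂ] Matrix (Fin ν) (Fin ν) ℂ :=
  (((1 - p : ℝ) : ℂ)) • depolS ν + ((p : ℝ) : ℂ) • transposeMap ν

/-- The flip (swap) operator `F = Σ_{i,j} |i,j⟩⟨j,i|`. -/
def flipOp (ν : ℕ) : Matrix (Fin ν × Fin ν) (Fin ν × Fin ν) ℂ :=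
  Matrix.of fun p q => if p.1 = q.2 ∧ p.2 = q.1 then 1 else 0

/-- Amplification on the right factor: `Φ ⊗ id_k`. -/
noncomputable def ampL {nB nA : ℕ} (k : ℕ)
    (Φ : Matrix (Fin nB) (Fin nB) ℂ →ₗ[ℂ] Matrix (Fin nA) (Fin nA) ℂ) :
    Matrix (Fin nB × Fin k) (Fin nB × Fin k) ℂ →ₗ[ℂ]
      Matrix (Fin nA × Fin k) (Fin nA × Fin k) ℂ where
  toFun X := Matrix.of fun p q => Φ (Matrix.of fun a b => X (a, p.2) (b, q.2)) p.1 q.1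
  map_add' X Y := by
    ext p q
    have h : (Matrix.of fun a b => (X + Y) (a, p.2) (b, q.2))
        = (Matrix.of fun a b => X (a, p.2) (b, q.2))
          + Matrix.of fun a b => Y (a, p.2) (b, q.2) := by
      ext a b; simp
    show Φ (Matrix.of fun a b => (X + Y) (a, p.2) (b, q.2)) p.1 q.1
      = Φ (Matrix.of fun a b => X (a, p.2) (b, q.2)) p.1 q.1
        + Φ (Matrix.of fun a b => Y (a, p.2) (b, q.2)) p.1 q.1
    rw [h, map_add]; rfl
  map_smul' c X := by
    ext p q
    have h : (Matrix.of fun a b => (c • X) (a, p.2) (b, q.2))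
        = c • Matrix.of fun a b => X (a, p.2) (b, q.2) := by
      ext a b; simp
    show Φ (Matrix.of fun a b => (c • X) (a, p.2) (b, q.2)) p.1 q.1
      = (c • Φ (Matrix.of fun a b => X (a, p.2) (b, q.2))) p.1 q.1
    rw [h, _root_.map_smul]

/-- Operational fidelity of two channels. -/
noncomputable def opFid {nA nB : ℕ}
    (T₁ T₂ : Matrix (Fin nB) (Fin nB) ℂ →ₗ[ℂ] Matrix (Fin nA) (Fin nA) ℂ) : ℝ :=
  ⨅ ψ : {ψ : Fin nA × Fin nA → ℂ // ∑ x, ‖ψ x‖ ^ 2 = 1},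
    fid (amp nA (dualMap T₁) (outer ψ.1)) (amp nA (dualMap T₂) (outer ψ.1))

/-- Minimality of a Stinespring representation. -/
def Minimal {nA nB nE : ℕ} (V : Matrix (Fin nB × Fin nE) (Fin nA) ℂ) : Prop :=
  Submodule.span ℂ {x : Fin nB × Fin nE → ℂ |
    ∃ (b : Matrix (Fin nB) (Fin nB) ℂ) (φ : Fin nA → ℂ),
      x = (b ⊗ₖ (1 : Matrix (Fin nE) (Fin nE) ℂ)).mulVec (V.mulVec φ)} = ⊤

/-!
Write `Tp = ((1 - p)/ν - p) • tr(·)1 + p • (tr(·)1 + Θ)`. Both `tr(·)1` and `2 (tr(·)1 + Θ)` are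
sums of conjugations `e ↦ Kᴴ e K` (with `K = Eᵢⱼ`, resp. `K = Eᵢⱼ + Eⱼᵢ`), hence completely
positive, so `Tp` is completely positive once `p ≤ (1 - p)/ν`. Conversely, the Choi matrix of `Tp`
is `(1 - p)/ν • 1 + p • F` with `F` the flip, and its quadratic form at the antisymmetric vector
`eᵢ ⊗ eⱼ - eⱼ ⊗ eᵢ` is `2 ((1 - p)/ν - p)`, which must be nonnegative.
-/

theorem _root_.Matrix.PosSemidef.add_sub_sub_nonneg {n R : Type*} [Fintype n] [DecidableEq n]
    [Ring R] [PartialOrder R] [StarRing R] {M : Matrix n n R} (hM : M.PosSemidef) (x y : n) :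
    0 ≤ M x x + M y y - M x y - M y x := by
  convert hM.dotProduct_mulVec_nonneg (Pi.single x 1 - Pi.single y 1) using 1
  simp only [star_sub, Pi.star_single, star_one, mulVec_sub, mulVec_single, MulOpposite.op_one,
    one_smul, dotProduct_sub, sub_dotProduct, single_dotProduct, col_apply, one_mul]
  abel

lemma amp_add {nB nA k : ℕ} (Φ Ψ : Matrix (Fin nB) (Fin nB) ℂ →ₗ[ℂ] Matrix (Fin nA) (Fin nA) ℂ) :
    amp k (Φ + Ψ) = amp k Φ + amp k Ψ :=
  rfl

lemma amp_smul {nB nA k : ℕ} (c : ℂ)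
    (Φ : Matrix (Fin nB) (Fin nB) ℂ →ₗ[ℂ] Matrix (Fin nA) (Fin nA) ℂ) :
    amp k (c • Φ) = c • amp k Φ :=
  rfl

lemma amp_sum {nB nA k : ℕ} {ι : Type*} (s : Finset ι)
    (Φ : ι → Matrix (Fin nB) (Fin nB) ℂ →ₗ[ℂ] Matrix (Fin nA) (Fin nA) ℂ) :
    amp k (∑ i ∈ s, Φ i) = ∑ i ∈ s, amp k (Φ i) := by
  induction s using Finset.induction_on with
  | empty => rfl
  | insert i s hi ih => rw [Finset.sum_insert hi, Finset.sum_insert hi, amp_add, ih]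

namespace IsCP

variable {nB nA : ℕ} {Φ Ψ : Matrix (Fin nB) (Fin nB) ℂ →ₗ[ℂ] Matrix (Fin nA) (Fin nA) ℂ}

lemma add (hΦ : IsCP Φ) (hΨ : IsCP Ψ) : IsCP (Φ + Ψ) := fun k X hX => by
  rw [amp_add]
  exact (hΦ k X hX).add (hΨ k X hX)

lemma smul (hΦ : IsCP Φ) {c : ℂ} (hc : 0 ≤ c) : IsCP (c • Φ) := fun k X hX => by
  rw [amp_smul]
  exact (hΦ k X hX).smul hc

lemma sum {ι : Type*} [Fintype ι]
    {Φ : ι → Matrix (Fin nB) (Fin nB) ℂ →ₗ[ℂ] Matrix (Fin nA) (Fin nA) ℂ}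
    (hΦ : ∀ i, IsCP (Φ i)) : IsCP (∑ i, Φ i) := fun k X hX => by
  rw [amp_sum, LinearMap.sum_apply]
  exact posSemidef_sum _ fun i _ => hΦ i k X hX

end IsCP

def conjMap {m n : ℕ} (K : Matrix (Fin m) (Fin n) ℂ) :
    Matrix (Fin m) (Fin m) ℂ →ₗ[ℂ] Matrix (Fin n) (Fin n) ℂ where
  toFun e := Kᴴ * e * K
  map_add' e f := by simp [Matrix.add_mul, Matrix.mul_add]
  map_smul' c e := by simp

lemma amp_conjMap {m n k : ℕ} (K : Matrix (Fin m) (Fin n) ℂ)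
    (X : Matrix (Fin k × Fin m) (Fin k × Fin m) ℂ) :
    amp k (conjMap K) X
      = ((1 : Matrix (Fin k) (Fin k) ℂ) ⊗ₖ K)ᴴ * X * ((1 : Matrix (Fin k) (Fin k) ℂ) ⊗ₖ K) := by
  ext ⟨c, a⟩ ⟨d, b⟩
  show (Kᴴ * (of fun i j => X (c, i) (d, j)) * K) a b = _
  simp [mul_apply, Fintype.sum_prod_type, one_apply, Finset.sum_mul, apply_ite (starRingEnd ℂ)]

lemma isCP_conjMap {m n : ℕ} (K : Matrix (Fin m) (Fin n) ℂ) : IsCP (conjMap K) :=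
  fun k X hX => by
    rw [amp_conjMap]
    exact hX.conjTranspose_mul_mul_same _

/-- The Choi matrix `∑ᵢⱼ Eᵢⱼ ⊗ Φ(Eᵢⱼ)`. -/
def choiMatrix {nB nA : ℕ}
    (Φ : Matrix (Fin nB) (Fin nB) ℂ →ₗ[ℂ] Matrix (Fin nA) (Fin nA) ℂ) :
    Matrix (Fin nB × Fin nA) (Fin nB × Fin nA) ℂ :=
  of fun x y => Φ (single x.1 y.1 1) x.2 y.2

def maxEntangledVec (n : ℕ) : Fin n × Fin n → ℂ := fun x => if x.1 = x.2 then 1 else 0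

lemma choiMatrix_eq_amp {nB nA : ℕ}
    (Φ : Matrix (Fin nB) (Fin nB) ℂ →ₗ[ℂ] Matrix (Fin nA) (Fin nA) ℂ) :
    choiMatrix Φ = amp nB Φ (vecMulVec (maxEntangledVec nB) (star (maxEntangledVec nB))) := by
  ext ⟨c, a⟩ ⟨d, b⟩
  set P := vecMulVec (maxEntangledVec nB) (star (maxEntangledVec nB)) with hP
  have hblock : (of fun i j => P (c, i) (d, j)) = single c d 1 := by
    ext i j
    simp [hP, maxEntangledVec, vecMulVec_apply, single_apply, ← ite_and, and_comm]
  show Φ (single c d 1) a b = Φ (of fun i j => P (c, i) (d, j)) a b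
  rw [hblock]

lemma IsCP.posSemidef_choiMatrix {nB nA : ℕ}
    {Φ : Matrix (Fin nB) (Fin nB) ℂ →ₗ[ℂ] Matrix (Fin nA) (Fin nA) ℂ} (hΦ : IsCP Φ) :
    (choiMatrix Φ).PosSemidef := by
  rw [choiMatrix_eq_amp]
  exact hΦ _ _ (posSemidef_vecMulVec_self_star _)

@[simp]
lemma transposeMap_apply {ν : ℕ} (e : Matrix (Fin ν) (Fin ν) ℂ) : transposeMap ν e = eᵀ :=
  rfl

lemma depol_one_eq_sum_conjMap (ν : ℕ) :
    (depol 1 : Matrix (Fin ν) (Fin ν) ℂ →ₗ[ℂ] Matrix (Fin ν) (Fin ν) ℂ)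
      = ∑ ij : Fin ν × Fin ν, conjMap (single ij.1 ij.2 1) := by
  ext e a b
  simp [depol, conjMap, Matrix.sum_apply, Fintype.sum_prod_type, one_apply, trace, single_apply,
    ite_and]

lemma depol_one_add_transposeMap_eq_sum_conjMap (ν : ℕ) :
    (2 : ℂ) • (depol 1 + transposeMap ν)
      = ∑ ij : Fin ν × Fin ν, conjMap (single ij.1 ij.2 1 + single ij.2 ij.1 1) := by
  ext e a b
  simp only [depol, conjMap, LinearMap.smul_apply, LinearMap.add_apply, LinearMap.coe_mk,
    AddHom.coe_mk, LinearMap.coe_sum, Finset.sum_apply, transposeMap_apply, conjTranspose_add,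
    conjTranspose_single, star_one, add_mul, mul_add, single_mul_mul_single, one_mul, mul_one,
    Matrix.add_apply, Matrix.smul_apply, Matrix.sum_apply, smul_eq_mul, trace, diag_apply,
    one_apply, transpose_apply, single_apply, ite_and, mul_ite, mul_zero, Fintype.sum_prod_type,
    Finset.sum_add_distrib, Finset.sum_ite_eq', Finset.mem_univ, ↓reduceIte, Finset.sum_ite_irrel,
    Finset.sum_const_zero]
  split_ifs <;> ring

lemma isCP_depol_one (ν : ℕ) :
    IsCP (depol 1 : Matrix (Fin ν) (Fin ν) ℂ →ₗ[ℂ] Matrix (Fin ν) (Fin ν) ℂ) := by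
  rw [depol_one_eq_sum_conjMap]
  exact IsCP.sum fun _ => isCP_conjMap _

lemma isCP_depol_one_add_transposeMap (ν : ℕ) : IsCP (depol 1 + transposeMap ν) := by
  rw [← inv_smul_smul₀ (two_ne_zero : (2 : ℂ) ≠ 0) (depol 1 + transposeMap ν),
    depol_one_add_transposeMap_eq_sum_conjMap]
  exact (IsCP.sum fun _ => isCP_conjMap _).smul (inv_nonneg.mpr zero_le_two)

lemma depolS_eq (ν : ℕ) : depolS ν = (ν : ℂ)⁻¹ • depol 1 := by
  ext e a b
  simp [depolS, depol, mul_assoc]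

lemma Tp_eq (ν : ℕ) (p : ℝ) :
    Tp ν p = (((1 - p) / ν - p : ℝ) : ℂ) • depol 1 + (p : ℂ) • (depol 1 + transposeMap ν) := by
  rw [Tp, depolS_eq]
  push_cast
  module

lemma isCP_Tp {ν : ℕ} {p : ℝ} (hp : 0 ≤ p) (hpν : p ≤ (1 - p) / ν) : IsCP (Tp ν p) := by
  rw [Tp_eq]
  exact ((isCP_depol_one ν).smul (Complex.zero_le_real.mpr (sub_nonneg.mpr hpν))).add
    ((isCP_depol_one_add_transposeMap ν).smul (Complex.zero_le_real.mpr hp))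

lemma choiMatrix_Tp_add_sub_sub {ν : ℕ} (p : ℝ) {i j : Fin ν} (hij : i ≠ j) :
    choiMatrix (Tp ν p) (i, j) (i, j) + choiMatrix (Tp ν p) (j, i) (j, i)
        - choiMatrix (Tp ν p) (i, j) (j, i) - choiMatrix (Tp ν p) (j, i) (i, j)
      = ((2 * ((1 - p) / ν - p) : ℝ) : ℂ) := by
  simp only [choiMatrix, Tp, depolS_eq, of_apply, LinearMap.add_apply, LinearMap.smul_apply,
    depol, LinearMap.coe_mk, AddHom.coe_mk, one_mul, transposeMap_apply, transpose_single,
    trace_single_eq_same, trace_single_eq_of_ne _ _ _ hij, trace_single_eq_of_ne _ _ _ hij.symm,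
    Matrix.add_apply, Matrix.smul_apply, one_apply, single_apply, smul_eq_mul, hij, hij.symm,
    and_self, ↓reduceIte]
  push_cast
  ring

lemma le_div_of_isCP_Tp {ν : ℕ} (hν : 2 ≤ ν) {p : ℝ} (h : IsCP (Tp ν p)) :
    p ≤ (1 - p) / ν := by
  have hquad := h.posSemidef_choiMatrix.add_sub_sub_nonneg (⟨0, by omega⟩, ⟨1, hν⟩)
    (⟨1, hν⟩, ⟨0, by omega⟩)
  rw [choiMatrix_Tp_add_sub_sub p (by simp [Fin.ext_iff]), Complex.zero_le_real] at hquad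
  linarith

theorem Tp_isCP_iff {ν : ℕ} (hν : 2 ≤ ν) (p : ℝ) (hp : p ∈ Set.Icc (0 : ℝ) 1) :
    IsCP (Tp ν p) ↔ p ≤ 1 / ((ν : ℝ) + 1) := by
  have hν0 : (0 : ℝ) < ν := Nat.cast_pos.mpr (by omega)
  have hbound : p ≤ (1 - p) / ν ↔ p ≤ 1 / ((ν : ℝ) + 1) := by
    rw [le_div_iff₀ hν0, le_div_iff₀ (by linarith)]
    constructor <;> intro <;> linarith
  rw [← hbound]
  exact ⟨le_div_of_isCP_Tp hν, isCP_Tp hp.1⟩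

end QI
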